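/- Let X be a finite set, μ a probability distribution on the set ℒ of strict linear orders on X, and define ρ̂(D,x) = μ({≻ : x ≻ y for all y ∈ D∖x}) for x ∈ D ⊆ X. Then for every x ∈ D ⊆ X, K(ρ̂, D, x) = μ({≻ : y ≻ x for all y ∈ X∖D and x ≻ z for all z ∈ D∖x}); in particular K(ρ̂, D, x) ≥ 0. -/

import Mathlib

/-!
Both sides are linear in `μ`, so it suffices to treat a single ranking `≻`. Writing the supersets
of `D` as `E = D ∪ S` with `S ⊆ X ∖ D`, the indicator of "`x` beats `E ∖ x`" factors as
"`x` beats `D ∖ x`" times `[S ⊆ A]`, where `A = {y ∉ D | y = x ∨ x ≻ y}`. The alternating sum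
of `[S ⊆ A]` over `S` is `[A = ∅]`, and `A = ∅` says exactly that every `y ∉ D` is ranked above `x`.
-/

open Finset

variable {α : Type*} [Fintype α] [DecidableEq α]

/-- A strict linear order (ranking) on the finite set `α`, encoded as an
irreflexive, transitive, weakly complete boolean relation. -/
def Ranking (α : Type*) [Fintype α] [DecidableEq α] : Type _ :=
  {r : α → α → Bool //
    (∀ x, ¬ r x x) ∧ (∀ x y z, r x y → r y z → r x z) ∧
    (∀ x y, x ≠ y → r x y ∨ r y x)}

instance : Fintype (Ranking α) := Subtype.fintype _

/-- The Block–Marschak polynomial `K(ρ, D, x) = ∑_{E ⊇ D} (-1)^{|E \ D|} ρ(E, x)`. -/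
noncomputable def bmK (ρ : Finset α → α → ℝ) (D : Finset α) (x : α) : ℝ :=
  ∑ E : Finset α, if D ⊆ E then (-1 : ℝ) ^ (E \ D).card * ρ E x else 0

theorem Finset.sum_superset_eq_sum_powerset_compl {M : Type*} [AddCommMonoid M]
    (D : Finset α) (f : Finset α → M) :
    ∑ E : Finset α, (if D ⊆ E then f E else 0) = ∑ S ∈ Dᶜ.powerset, f (D ∪ S) := by
  rw [← sum_filter]
  refine sum_nbij' (· \ D) (D ∪ ·) ?_ ?_ ?_ ?_ ?_
  · intro E _
    simp [subset_iff]
  · intro S _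
    simp
  · intro E hE
    exact union_sdiff_of_subset (mem_filter.1 hE).2
  · intro S hS
    simp only [mem_powerset, subset_compl_iff_disjoint_left] at hS
    simp [union_sdiff_left, hS.sdiff_eq_right]
  · intro E hE
    rw [union_sdiff_of_subset (mem_filter.1 hE).2]

theorem Finset.sum_superset_neg_one_pow_mul_boole_forall {R : Type*} [CommRing R]
    (Q : α → Prop) [DecidablePred Q] (D : Finset α) :
    ∑ E : Finset α, (if D ⊆ E then (-1 : R) ^ #(E \ D) * (if ∀ y ∈ E, Q y then 1 else 0)
      else 0) = if (∀ y ∈ D, Q y) ∧ ∀ y ∉ D, ¬ Q y then 1 else 0 := by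
  set A := Dᶜ.filter Q
  have hterm : ∀ S ∈ Dᶜ.powerset, (-1 : R) ^ #((D ∪ S) \ D) *
      (if ∀ y ∈ D ∪ S, Q y then 1 else 0) =
      (if ∀ y ∈ D, Q y then 1 else 0) * (if S ⊆ A then (-1 : R) ^ #S else 0) := by
    intro S hS
    rw [mem_powerset] at hS
    have hforall : (∀ y ∈ D ∪ S, Q y) ↔ (∀ y ∈ D, Q y) ∧ S ⊆ A := by
      simp only [mem_union, or_imp, forall_and, A, subset_iff, mem_filter]
      exact and_congr_right fun _ => (and_iff_right fun y hy => hS hy).symm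
    rw [union_sdiff_left, (subset_compl_iff_disjoint_left.1 hS).sdiff_eq_right]
    simp only [hforall, ite_and]
    split_ifs <;> simp
  have hpow : Dᶜ.powerset.filter (· ⊆ A) = A.powerset := by
    ext S
    simpa using fun h : S ⊆ A => h.trans (filter_subset _ _)
  have halt : ∑ S ∈ A.powerset, (-1 : R) ^ #S = if A = ∅ then 1 else 0 := by
    exact_mod_cast congrArg (Int.cast : ℤ → R) sum_powerset_neg_one_pow_card
  rw [sum_superset_eq_sum_powerset_compl, sum_congr rfl hterm, ← mul_sum, ← sum_filter, hpow, halt,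
    ite_zero_mul_ite_zero, one_mul]
  exact if_congr (and_congr_right fun _ => by simp [A, filter_eq_empty_iff]) rfl rfl

theorem Ranking.rel_iff_ne_and_not_rel (p : Ranking α) (x y : α) :
    p.1 y x ↔ y ≠ x ∧ ¬ p.1 x y := by
  obtain ⟨r, hirr, htrans, htotal⟩ := p
  refine ⟨fun hyx => ⟨fun h => hirr x (h ▸ hyx), fun hxy => hirr x (htrans x y x hxy hyx)⟩, ?_⟩
  rintro ⟨hne, hxy⟩
  exact (htotal y x hne).resolve_right hxy

theorem bmK_sum_mul {ι : Type*} (s : Finset ι) (c : ι → ℝ) (g : ι → Finset α → α → ℝ)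
    (D : Finset α) (x : α) :
    bmK (fun E x => ∑ i ∈ s, c i * g i E x) D x = ∑ i ∈ s, c i * bmK (g i) D x := by
  simp only [bmK, mul_sum]
  rw [sum_comm]
  refine sum_congr rfl fun E _ => ?_
  split_ifs
  · exact sum_congr rfl fun i _ => mul_left_comm _ _ _
  · simp

theorem bmK_boole_beats (p : Ranking α) (D : Finset α) (x : α) :
    bmK (fun E x => if ∀ y ∈ E, y ≠ x → p.1 x y then 1 else 0) D x =
      if (∀ y, y ∉ D → p.1 y x) ∧ (∀ z ∈ D, z ≠ x → p.1 x z) then 1 else 0 := by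
  rw [bmK, sum_superset_neg_one_pow_mul_boole_forall]
  refine if_congr ?_ rfl rfl
  simp only [Classical.not_imp, ← p.rel_iff_ne_and_not_rel]
  exact and_comm

/-- The choice probabilities `ρ̂(D, x)` induced by a random utility model `μ`. -/
noncomputable def rumChoice (μ : Ranking α → ℝ) (D : Finset α) (x : α) : ℝ :=
  ∑ p : Ranking α, if ∀ y ∈ D, y ≠ x → p.1 x y then μ p else 0

theorem bmK_rumChoice (μ : Ranking α → ℝ) (D : Finset α) (x : α) :
    bmK (rumChoice μ) D x = ∑ p : Ranking α,
      if (∀ y, y ∉ D → p.1 y x) ∧ (∀ z ∈ D, z ≠ x → p.1 x z) then μ p else 0 := by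
  unfold rumChoice
  simp only [← mul_boole _ (μ _), bmK_sum_mul, bmK_boole_beats]

theorem stmt_13_general (μ : Ranking α → ℝ) (hμ0 : ∀ p, 0 ≤ μ p)
    (ρ : Finset α → α → ℝ)
    (hρ : ρ = fun D x => ∑ p : Ranking α,
      if ∀ y ∈ D, y ≠ x → p.1 x y then μ p else 0)
    (D : Finset α) (x : α) :
    bmK ρ D x = (∑ p : Ranking α,
      if (∀ y, y ∉ D → p.1 y x) ∧ (∀ z ∈ D, z ≠ x → p.1 x z) then μ p else 0) ∧
    0 ≤ bmK ρ D x := by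
  rw [show ρ = rumChoice μ from hρ, bmK_rumChoice]
  exact ⟨rfl, sum_nonneg fun p _ => ite_nonneg (hμ0 p) le_rfl⟩

/-- For a random utility model `μ`, the Block–Marschak polynomial of the induced
stochastic choice `ρ̂(D,x) = μ(x ≻ y ∀ y ∈ D∖x)` equals the probability mass of
rankings placing `x` below all of `X∖D` and above all of `D∖x`; in particular it
is nonnegative. -/
theorem stmt_13 (μ : Ranking α → ℝ) (hμ0 : ∀ p, 0 ≤ μ p)
    (hμ1 : ∑ p : Ranking α, μ p = 1)
    (ρ : Finset α → α → ℝ)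
    (hρ : ρ = fun D x => ∑ p : Ranking α,
      if ∀ y ∈ D, y ≠ x → p.1 x y then μ p else 0)
    (D : Finset α) (x : α) (hx : x ∈ D) :
    bmK ρ D x = (∑ p : Ranking α,
      if (∀ y, y ∉ D → p.1 y x) ∧ (∀ z ∈ D, z ≠ x → p.1 x z) then μ p else 0) ∧
    0 ≤ bmK ρ D x :=
  stmt_13_general μ hμ0 ρ hρ D x
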